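/- Fix an integer M ≥ 1 and, for each m = 1, …, M: mixture weights p_m ∈ [0,1] and shape factors k_{m,L}, k_{m,N} > 0 for the UAV–tag-m channel, a distance d_m > 0, and an SNR threshold x_m > 0; also fix a mixture weight p_B ∈ [0,1], shape factors k_{B,L}, k_{B,N} > 0, a UAV–BS distance d_B > 0 and a threshold x_B > 0; and constants β₀ > 0, η, η_r, η_c ∈ (0,1), P_v, P_c > 0, noise powers σ_u², σ_v², σ_B² > 0. For each m let X_m, Y_m be independent mixture-gamma channel power gains with parameters (p_m, k_{m,L}, β₀ d_m^{-2}, k_{m,N}, η β₀ d_m^{-2}) with common density f_m, and let the three quantities F_m := P(η_r P_v X_m Y_m/(X_m σ_u² + σ_v²) < x_m), F_B := p_B·Γ̃(k_{B,L}, x_B σ_B² d_B² k_{B,L}/(P_v β₀)) + (1-p_B)·Γ̃(k_{B,N}, x_B σ_B² d_B² k_{B,N}/(P_v η β₀)), and P_{e,m} := p_m·Γ̃(k_{m,L}, P_c d_m² k_{m,L}/((m-η_r) η_c P_v β₀)) + (1-p_m)·Γ̃(k_{m,N}, P_c d_m² k_{m,N}/((m-η_r) η_c P_v β₀ η)) be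 as in the closed-form CDF and energy-outage lemmas. Then the system average outage probability P_in := (1/M)·Σ_{m=1}^M [1 - (1 - F_m)(1 - F_B)(1 - P_{e,m})] equals 1 - (1/M)·Σ_{m=1}^M (1 - F_B)·(1 - P_{e,m})·(1 - ∫₀^∞ [ p_m·Γ̃(k_{m,L}, x_m (y σ_u² + σ_v²) d_m² k_{m,L}/(η_r P_v y β₀)) + (1-p_m)·Γ̃(k_{m,N}, x_m (y σ_u² + σ_v²) d_m² k_{m,N}/(η_r P_v y η β₀)) ]·f_m(y) dy ). -/

import Mathlib

open MeasureTheory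

/-- Regularized lower incomplete gamma function
`Γ̃(k, x) = (1/Γ(k)) · ∫₀ˣ t^(k-1) e^(-t) dt`. -/
noncomputable def regGamma (k x : ℝ) : ℝ :=
  (1 / Real.Gamma k) * ∫ t in (0:ℝ)..x, t ^ (k - 1) * Real.exp (-t)

/-- Gamma density with shape `k > 0` and rate `r > 0`. -/
noncomputable def gammaDensity (k r x : ℝ) : ℝ :=
  if 0 < x then (r ^ k / Real.Gamma k) * x ^ (k - 1) * Real.exp (-(r * x)) else 0

/-- Mixture of two Gamma densities with means `ΩL`, `ΩN` and weights `p`, `1-p`. -/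
noncomputable def mixDensity (p kL ΩL kN ΩN x : ℝ) : ℝ :=
  p * gammaDensity kL (kL / ΩL) x + (1 - p) * gammaDensity kN (kN / ΩN) x

/-- Closed-form CDF of the UAV–BS uplink SNR at threshold `x` (Eq. (15)). -/
noncomputable def uplinkCDF (p kL kN β₀ η d Pv σ2 x : ℝ) : ℝ :=
  p * regGamma kL (x * σ2 * d ^ 2 * kL / (Pv * β₀)) +
  (1 - p) * regGamma kN (x * σ2 * d ^ 2 * kN / (Pv * η * β₀))

/-- Closed-form energy outage probability of a tag in slot `mreal` (Lemma 1). -/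
noncomputable def energyOutage (p kL kN β₀ η d Pc ηc ηr Pv mreal : ℝ) : ℝ :=
  p * regGamma kL (Pc * d ^ 2 * kL / ((mreal - ηr) * ηc * Pv * β₀)) +
  (1 - p) * regGamma kN (Pc * d ^ 2 * kN / ((mreal - ηr) * ηc * Pv * β₀ * η))

open Set

lemma gammaDensity_nonneg {k r : ℝ} (hk : 0 < k) (hr : 0 ≤ r) (x : ℝ) :
    0 ≤ gammaDensity k r x := by
  unfold gammaDensity
  split
  · have := Real.Gamma_pos_of_pos hk
    positivity
  · exact le_refl 0

lemma gammaDensity_of_nonpos {k r x : ℝ} (hx : x ≤ 0) : gammaDensity k r x = 0 := by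
  simp [gammaDensity, not_lt.mpr hx]

lemma mixDensity_nonneg {p kL ΩL kN ΩN : ℝ} (hp : p ∈ Set.Icc (0:ℝ) 1)
    (hkL : 0 < kL) (hkN : 0 < kN) (hΩL : 0 < ΩL) (hΩN : 0 < ΩN) (x : ℝ) :
    0 ≤ mixDensity p kL ΩL kN ΩN x := by
  have h1 := gammaDensity_nonneg hkL (le_of_lt (div_pos hkL hΩL)) x
  have h2 := gammaDensity_nonneg hkN (le_of_lt (div_pos hkN hΩN)) x
  have := hp.1; have := hp.2
  apply add_nonneg (mul_nonneg hp.1 h1) (mul_nonneg (by linarith) h2)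

lemma mixDensity_of_nonpos {p kL ΩL kN ΩN x : ℝ} (hx : x ≤ 0) :
    mixDensity p kL ΩL kN ΩN x = 0 := by
  simp [mixDensity, gammaDensity_of_nonpos hx]

lemma measurable_gammaDensity (k r : ℝ) : Measurable (gammaDensity k r) := by
  unfold gammaDensity
  exact Measurable.ite measurableSet_Ioi (by fun_prop) measurable_const

lemma measurable_mixDensity (p kL ΩL kN ΩN : ℝ) :
    Measurable (mixDensity p kL ΩL kN ΩN) := by
  unfold mixDensity
  exact ((measurable_gammaDensity _ _).const_mul _).add
    ((measurable_gammaDensity _ _).const_mul _)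

lemma regGamma_nonneg {k : ℝ} (hk : 0 < k) {t : ℝ} (ht : 0 ≤ t) : 0 ≤ regGamma k t := by
  have hΓ := Real.Gamma_pos_of_pos hk
  unfold regGamma
  refine mul_nonneg (by positivity) ?_
  refine intervalIntegral.integral_nonneg ht fun u hu => ?_
  have := hu.1
  positivity

lemma regGamma_le_one {k : ℝ} (hk : 0 < k) {t : ℝ} (ht : 0 ≤ t) : regGamma k t ≤ 1 := by
  have hΓ := Real.Gamma_pos_of_pos hk
  unfold regGamma
  rw [one_div, inv_mul_le_iff₀ hΓ, mul_one]
  rw [intervalIntegral.integral_of_le ht, Real.Gamma_eq_integral hk]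
  calc ∫ u in Ioc 0 t, u ^ (k - 1) * Real.exp (-u)
      = ∫ u in Ioc 0 t, Real.exp (-u) * u ^ (k - 1) := by
        simp_rw [mul_comm]
    _ ≤ ∫ u in Ioi 0, Real.exp (-u) * u ^ (k - 1) := by
        apply setIntegral_mono_set (Real.GammaIntegral_convergent hk)
        · refine (ae_restrict_iff' measurableSet_Ioi).mpr (ae_of_all _ fun u hu => ?_)
          have : (0:ℝ) < u := hu
          positivity
        · exact HasSubset.Subset.eventuallyLE Ioc_subset_Ioi_self

lemma integral_gammaDensity {k r : ℝ} (hk : 0 < k) (hr : 0 < r) {t : ℝ} (ht : 0 ≤ t) :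
    ∫ v in (0:ℝ)..t, gammaDensity k r v = regGamma k (r * t) := by
  have hΓ := Real.Gamma_pos_of_pos hk
  have h1 : ∫ v in (0:ℝ)..t, gammaDensity k r v
      = ∫ v in (0:ℝ)..t, (r / Real.Gamma k) *
          ((fun s => s ^ (k - 1) * Real.exp (-s)) (r * v)) := by
    apply intervalIntegral.integral_congr_ae
    filter_upwards with v hv
    rw [Set.uIoc_of_le ht] at hv
    have hv0 : 0 < v := hv.1
    simp only [gammaDensity, if_pos hv0]
    rw [Real.mul_rpow hr.le hv0.le]
    have : r ^ (k - 1) = r ^ k / r := by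
      rw [Real.rpow_sub hr, Real.rpow_one]
    rw [this]
    field_simp
  rw [h1, intervalIntegral.integral_const_mul,
    intervalIntegral.integral_comp_mul_left (fun s => s ^ (k - 1) * Real.exp (-s)) hr.ne',
    mul_zero]
  unfold regGamma
  rw [smul_eq_mul]
  field_simp

lemma gammaDensity_intervalIntegrable {k r : ℝ} (hk : 0 < k) {t : ℝ} (ht : 0 ≤ t) :
    IntervalIntegrable (gammaDensity k r) volume 0 t := by
  rw [intervalIntegrable_iff_integrableOn_Ioc_of_le ht]
  rw [integrableOn_congr_fun
    (g := fun v => (r ^ k / Real.Gamma k) * (v ^ (k - 1) * Real.exp (-(r * v))))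
    (fun v hv => by simp only [gammaDensity, if_pos hv.1]; ring) measurableSet_Ioc]
  have h1 : IntervalIntegrable (fun v : ℝ => v ^ (k - 1) * Real.exp (-(r * v))) volume 0 t := by
    apply (intervalIntegral.intervalIntegrable_rpow' (by linarith)).mul_continuousOn
    exact (Real.continuous_exp.comp (by continuity)).continuousOn
  have h2 := (h1.const_mul (r ^ k / Real.Gamma k))
  rw [intervalIntegrable_iff_integrableOn_Ioc_of_le ht] at h2
  exact h2

lemma mixDensity_integrableOn_Ioc {p kL ΩL kN ΩN : ℝ} (hkL : 0 < kL) (hkN : 0 < kN)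
    {t : ℝ} (ht : 0 ≤ t) :
    IntegrableOn (mixDensity p kL ΩL kN ΩN) (Ioc 0 t) := by
  have h1 := (gammaDensity_intervalIntegrable (r := kL / ΩL) hkL ht).const_mul p
  have h2 := (gammaDensity_intervalIntegrable (r := kN / ΩN) hkN ht).const_mul (1 - p)
  have := (h1.add h2)
  rw [intervalIntegrable_iff_integrableOn_Ioc_of_le ht] at this
  exact this

lemma mix_measure_Iio {p kL ΩL kN ΩN : ℝ} (hp : p ∈ Set.Icc (0:ℝ) 1)
    (hkL : 0 < kL) (hkN : 0 < kN) (hΩL : 0 < ΩL) (hΩN : 0 < ΩN) {t : ℝ} (ht : 0 < t) :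
    (volume : Measure ℝ).withDensity
        (fun y => ENNReal.ofReal (mixDensity p kL ΩL kN ΩN y)) (Iio t)
      = ENNReal.ofReal (p * regGamma kL (t * (kL / ΩL)) +
          (1 - p) * regGamma kN (t * (kN / ΩN))) := by
  rw [withDensity_apply _ measurableSet_Iio]
  have hsplit : Iio t = Iic 0 ∪ Ioo 0 t := by
    ext y
    simp only [mem_Iio, mem_union, mem_Iic, mem_Ioo]
    constructor
    · intro h
      rcases le_or_gt y 0 with h' | h'
      · exact Or.inl h'
      · exact Or.inr ⟨h', h⟩
    · rintro (h | ⟨_, h⟩) <;> [linarith; exact h]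
  rw [hsplit, lintegral_union measurableSet_Ioo (by
    apply Set.disjoint_left.mpr
    intro y hy hy'
    exact absurd hy'.1 (not_lt.mpr hy))]
  have hz : ∫⁻ y in Iic 0, ENNReal.ofReal (mixDensity p kL ΩL kN ΩN y) = 0 := by
    rw [setLIntegral_congr_fun (g := fun _ => 0) measurableSet_Iic
      (fun y hy => by simp [mixDensity_of_nonpos hy])]
    simp
  rw [hz, zero_add]
  have hint : IntegrableOn (mixDensity p kL ΩL kN ΩN) (Ioo 0 t) :=
    (mixDensity_integrableOn_Ioc hkL hkN ht.le).mono_set Ioo_subset_Ioc_self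
  rw [← ofReal_integral_eq_lintegral_ofReal hint
    ((ae_restrict_iff' measurableSet_Ioo).mpr (ae_of_all _ fun y _ =>
      mixDensity_nonneg hp hkL hkN hΩL hΩN y))]
  congr 1
  rw [← integral_Ioc_eq_integral_Ioo, ← intervalIntegral.integral_of_le ht.le]
  unfold mixDensity
  rw [intervalIntegral.integral_add
      ((gammaDensity_intervalIntegrable hkL ht.le).const_mul p)
      ((gammaDensity_intervalIntegrable hkN ht.le).const_mul (1 - p)),
    intervalIntegral.integral_const_mul, intervalIntegral.integral_const_mul,
    integral_gammaDensity hkL (div_pos hkL hΩL) ht.le,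
    integral_gammaDensity hkN (div_pos hkN hΩN) ht.le, mul_comm (kL / ΩL) t,
    mul_comm (kN / ΩN) t]

lemma continuous_regGamma {k : ℝ} (hk : 0 < k) : Continuous (regGamma k) := by
  unfold regGamma
  apply Continuous.mul continuous_const
  apply intervalIntegral.continuous_primitive
  intro a b
  exact (intervalIntegral.intervalIntegrable_rpow' (by linarith)).mul_continuousOn
    (Real.continuous_exp.comp continuous_neg).continuousOn

lemma key {α : Type*} [MeasureSpace α] [IsProbabilityMeasure (volume : Measure α)]
    {p kL ΩL kN ΩN a x σu2 σv2 : ℝ}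
    (hp : p ∈ Set.Icc (0:ℝ) 1) (hkL : 0 < kL) (hkN : 0 < kN)
    (hΩL : 0 < ΩL) (hΩN : 0 < ΩN) (ha : 0 < a) (hx : 0 < x)
    (hσu2 : 0 < σu2) (hσv2 : 0 < σv2)
    {X Y : α → ℝ} (hXm : Measurable X) (hYm : Measurable Y)
    (hindep : ProbabilityTheory.IndepFun X Y volume)
    (hlawX : Measure.map X volume = (volume : Measure ℝ).withDensity
        (fun y => ENNReal.ofReal (mixDensity p kL ΩL kN ΩN y)))
    (hlawY : Measure.map Y volume = (volume : Measure ℝ).withDensity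
        (fun y => ENNReal.ofReal (mixDensity p kL ΩL kN ΩN y))) :
    ((volume : Measure α) {ω | a * X ω * Y ω / (X ω * σu2 + σv2) < x}).toReal
      = ∫ y in Set.Ioi (0:ℝ),
          (p * regGamma kL (x * (y * σu2 + σv2) / (a * y) * (kL / ΩL)) +
           (1 - p) * regGamma kN (x * (y * σu2 + σv2) / (a * y) * (kN / ΩN))) *
          mixDensity p kL ΩL kN ΩN y := by
  set f : ℝ → ℝ := mixDensity p kL ΩL kN ΩN with hf
  set μ : Measure ℝ := (volume : Measure ℝ).withDensity (fun y => ENNReal.ofReal (f y))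
    with hμ
  have hfm : Measurable f := measurable_mixDensity p kL ΩL kN ΩN
  have hfnn : ∀ y, 0 ≤ f y := mixDensity_nonneg hp hkL hkN hΩL hΩN
  have hμprob : IsProbabilityMeasure μ := by
    have h := Measure.isProbabilityMeasure_map (μ := volume) hYm.aemeasurable
    rwa [hlawY] at h
  set G : ℝ → ℝ := fun y =>
    p * regGamma kL (x * (y * σu2 + σv2) / (a * y) * (kL / ΩL)) +
    (1 - p) * regGamma kN (x * (y * σu2 + σv2) / (a * y) * (kN / ΩN)) with hG
  set t : ℝ → ℝ := fun y => x * (y * σu2 + σv2) / (a * y) with hT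
  have htpos : ∀ y : ℝ, 0 < y → 0 < t y := fun y hy => by
    have : 0 < y * σu2 + σv2 := by positivity
    exact div_pos (by positivity) (by positivity)
  set S : Set (ℝ × ℝ) := {q : ℝ × ℝ | a * q.1 * q.2 / (q.1 * σu2 + σv2) < x} with hS
  have hSm : MeasurableSet S := by
    apply measurableSet_lt (by fun_prop) measurable_const
  -- step A
  have hmap : (volume : Measure α) {ω | a * X ω * Y ω / (X ω * σu2 + σv2) < x}
      = (μ.prod μ) S := by
    have h2 := (ProbabilityTheory.indepFun_iff_map_prod_eq_prod_map_map
      hXm.aemeasurable hYm.aemeasurable).mp hindep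
    rw [hlawX, hlawY] at h2
    rw [← h2, Measure.map_apply (hXm.prodMk hYm) hSm]
    rfl
  -- step B+C
  have hslice : ∀ u : ℝ, 0 < u → (Prod.mk u ⁻¹' S) = Iio (t u) := by
    intro u hu
    ext v
    have hD : 0 < u * σu2 + σv2 := by positivity
    simp only [hS, mem_preimage, mem_setOf_eq, mem_Iio, hT]
    rw [div_lt_iff₀ hD, lt_div_iff₀ (by positivity : (0:ℝ) < a * u)]
    constructor <;> intro h <;> nlinarith
  have hB : (μ.prod μ) S = ∫⁻ u, ENNReal.ofReal (f u) * μ (Prod.mk u ⁻¹' S) := by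
    rw [Measure.prod_apply hSm, hμ,
      lintegral_withDensity_eq_lintegral_mul _ hfm.ennreal_ofReal
        (measurable_measure_prodMk_left hSm)]
    rfl
  have hC : ∀ u : ℝ, ENNReal.ofReal (f u) * μ (Prod.mk u ⁻¹' S)
      = (Ioi (0:ℝ)).indicator (fun u => ENNReal.ofReal (G u * f u)) u := by
    intro u
    rcases le_or_gt u 0 with hu | hu
    · have hfu : f u = 0 := mixDensity_of_nonpos hu
      simp [hfu, Set.indicator_of_notMem (notMem_Ioi.mpr hu)]
    · rw [Set.indicator_of_mem (Set.mem_Ioi.mpr hu), hslice u hu]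
      have hmm : μ (Iio (t u)) = ENNReal.ofReal (G u) := by
        rw [hμ, hf]
        exact mix_measure_Iio hp hkL hkN hΩL hΩN (htpos u hu)
      rw [hmm, ← ENNReal.ofReal_mul (hfnn u), mul_comm (f u) (G u)]
  rw [hmap, hB]
  have hstep : ∫⁻ u, ENNReal.ofReal (f u) * μ (Prod.mk u ⁻¹' S)
      = ∫⁻ u in Ioi 0, ENNReal.ofReal (G u * f u) := by
    simp_rw [hC]
    rw [lintegral_indicator measurableSet_Ioi]
  rw [hstep]
  have hGnn : ∀ u ∈ Ioi (0:ℝ), 0 ≤ G u := by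
    intro u hu
    have hu0 : (0:ℝ) < u := hu
    have h1 : 0 ≤ x * (u * σu2 + σv2) / (a * u) * (kL / ΩL) := by positivity
    have h2 : 0 ≤ x * (u * σu2 + σv2) / (a * u) * (kN / ΩN) := by positivity
    have := regGamma_nonneg hkL h1
    have := regGamma_nonneg hkN h2
    have := hp.1; have := hp.2
    simp only [hG]
    nlinarith
  have hGle : ∀ u ∈ Ioi (0:ℝ), G u ≤ 1 := by
    intro u hu
    have hu0 : (0:ℝ) < u := hu
    have h1 : 0 ≤ x * (u * σu2 + σv2) / (a * u) * (kL / ΩL) := by positivity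
    have h2 : 0 ≤ x * (u * σu2 + σv2) / (a * u) * (kN / ΩN) := by positivity
    have := regGamma_nonneg hkL h1
    have := regGamma_nonneg hkN h2
    have := regGamma_le_one hkL h1
    have := regGamma_le_one hkN h2
    have := hp.1; have := hp.2
    simp only [hG]
    nlinarith
  have hGcont : ContinuousOn G (Ioi (0:ℝ)) := by
    have hden : ∀ u ∈ Ioi (0:ℝ), a * u ≠ 0 := fun u hu => by
      have : (0:ℝ) < u := hu; positivity
    have hc1 : ContinuousOn (fun u : ℝ => x * (u * σu2 + σv2) / (a * u)) (Ioi 0) :=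
      ContinuousOn.div (by fun_prop) (by fun_prop) hden
    simp only [hG]
    exact (((continuous_regGamma hkL).comp_continuousOn (hc1.mul continuousOn_const)).const_smul p).add
      (((continuous_regGamma hkN).comp_continuousOn (hc1.mul continuousOn_const)).const_smul (1 - p))
  have hfint : Integrable f := by
    have h1 : ∫⁻ y, ENNReal.ofReal (f y) = 1 := by
      have h2 := hμprob.measure_univ
      rwa [hμ, withDensity_apply _ MeasurableSet.univ, Measure.restrict_univ] at h2
    refine ⟨hfm.aestronglyMeasurable, ?_⟩
    rw [hasFiniteIntegral_iff_ofReal (ae_of_all _ hfnn), h1]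
    exact ENNReal.one_lt_top
  have hGf_int : IntegrableOn (fun u => G u * f u) (Ioi 0) := by
    have hmeas : AEStronglyMeasurable (fun u => G u * f u) (volume.restrict (Ioi 0)) :=
      (hGcont.aestronglyMeasurable measurableSet_Ioi).mul hfm.aestronglyMeasurable.restrict
    apply Integrable.mono (hfint.restrict (s := Ioi 0)) hmeas
    refine (ae_restrict_iff' measurableSet_Ioi).mpr (ae_of_all _ fun u hu => ?_)
    rw [Real.norm_eq_abs, Real.norm_eq_abs,
      abs_of_nonneg (mul_nonneg (hGnn u hu) (hfnn u)), abs_of_nonneg (hfnn u)]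
    nlinarith [hGle u hu, hGnn u hu, hfnn u]
  rw [← ofReal_integral_eq_lintegral_ofReal hGf_int
    ((ae_restrict_iff' measurableSet_Ioi).mpr
      (ae_of_all _ fun u hu => mul_nonneg (hGnn u hu) (hfnn u)))]
  exact ENNReal.toReal_ofReal
    (setIntegral_nonneg measurableSet_Ioi fun u hu => mul_nonneg (hGnn u hu) (hfnn u))


set_option maxHeartbeats 1000000 in
/-- **Theorem 1, system average outage probability.** With `F_m` the
backscatter SNR outage probability of tag `m`, `F_B` the closed-form uplink CDF and
`P_{e,m}` the closed-form energy outage probability, the system average outage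
probability `(1/M) Σ_m [1 - (1-F_m)(1-F_B)(1-P_{e,m})]` equals
`1 - (1/M) Σ_m (1-F_B)(1-P_{e,m})(1 - ∫₀^∞ [p_m Γ̃(k_{m,L}, ·) + (1-p_m) Γ̃(k_{m,N}, ·)] f_m(y) dy)`. -/
theorem system_average_outage_probability
    {α : Type*} [MeasureSpace α] [IsProbabilityMeasure (volume : Measure α)]
    (M : ℕ) (hM : 1 ≤ M)
    (p kL kN d x : ℕ → ℝ)
    (pB kBL kBN dB xB β₀ η ηr ηc Pv Pc σu2 σv2 σB2 : ℝ)
    (hp : ∀ m ∈ Finset.Icc 1 M, p m ∈ Set.Icc (0:ℝ) 1)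
    (hkL : ∀ m ∈ Finset.Icc 1 M, 0 < kL m) (hkN : ∀ m ∈ Finset.Icc 1 M, 0 < kN m)
    (hd : ∀ m ∈ Finset.Icc 1 M, 0 < d m) (hx : ∀ m ∈ Finset.Icc 1 M, 0 < x m)
    (hpB : pB ∈ Set.Icc (0:ℝ) 1) (hkBL : 0 < kBL) (hkBN : 0 < kBN)
    (hdB : 0 < dB) (hxB : 0 < xB) (hβ₀ : 0 < β₀)
    (hη : η ∈ Set.Ioo (0:ℝ) 1) (hηr : ηr ∈ Set.Ioo (0:ℝ) 1) (hηc : ηc ∈ Set.Ioo (0:ℝ) 1)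
    (hPv : 0 < Pv) (hPc : 0 < Pc)
    (hσu2 : 0 < σu2) (hσv2 : 0 < σv2) (hσB2 : 0 < σB2)
    (X Y : ℕ → α → ℝ)
    (hXnonneg : ∀ m ∈ Finset.Icc 1 M, ∀ ω, 0 ≤ X m ω)
    (hYnonneg : ∀ m ∈ Finset.Icc 1 M, ∀ ω, 0 ≤ Y m ω)
    (hX : ∀ m ∈ Finset.Icc 1 M, Measurable (X m))
    (hY : ∀ m ∈ Finset.Icc 1 M, Measurable (Y m))
    (hindep : ∀ m ∈ Finset.Icc 1 M, ProbabilityTheory.IndepFun (X m) (Y m) volume)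
    (hlawX : ∀ m ∈ Finset.Icc 1 M, Measure.map (X m) volume =
      (volume : Measure ℝ).withDensity
        (fun y => ENNReal.ofReal
          (mixDensity (p m) (kL m) (β₀ * d m ^ (-2 : ℝ)) (kN m) (η * β₀ * d m ^ (-2 : ℝ)) y)))
    (hlawY : ∀ m ∈ Finset.Icc 1 M, Measure.map (Y m) volume =
      (volume : Measure ℝ).withDensity
        (fun y => ENNReal.ofReal
          (mixDensity (p m) (kL m) (β₀ * d m ^ (-2 : ℝ)) (kN m) (η * β₀ * d m ^ (-2 : ℝ)) y))) :
    (1 / (M : ℝ)) * ∑ m ∈ Finset.Icc 1 M,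
        (1 - (1 - ((volume : Measure α)
              {ω | ηr * Pv * X m ω * Y m ω / (X m ω * σu2 + σv2) < x m}).toReal) *
          (1 - uplinkCDF pB kBL kBN β₀ η dB Pv σB2 xB) *
          (1 - energyOutage (p m) (kL m) (kN m) β₀ η (d m) Pc ηc ηr Pv (m : ℝ))) =
      1 - (1 / (M : ℝ)) * ∑ m ∈ Finset.Icc 1 M,
        (1 - uplinkCDF pB kBL kBN β₀ η dB Pv σB2 xB) *
        (1 - energyOutage (p m) (kL m) (kN m) β₀ η (d m) Pc ηc ηr Pv (m : ℝ)) *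
        (1 - ∫ y in Set.Ioi (0:ℝ),
          (p m * regGamma (kL m)
              (x m * (y * σu2 + σv2) * d m ^ 2 * kL m / (ηr * Pv * y * β₀)) +
            (1 - p m) * regGamma (kN m)
              (x m * (y * σu2 + σv2) * d m ^ 2 * kN m / (ηr * Pv * y * η * β₀))) *
            mixDensity (p m) (kL m) (β₀ * d m ^ (-2 : ℝ)) (kN m) (η * β₀ * d m ^ (-2 : ℝ)) y) := by
  have hcard : (Finset.Icc 1 M).card = M := by simp
  have hM0 : (M : ℝ) ≠ 0 := by
    have : (0:ℕ) < M := hM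
    exact_mod_cast this.ne'
  have key_m : ∀ m ∈ Finset.Icc 1 M,
      ((volume : Measure α)
          {ω | ηr * Pv * X m ω * Y m ω / (X m ω * σu2 + σv2) < x m}).toReal
        = ∫ y in Set.Ioi (0:ℝ),
            (p m * regGamma (kL m)
                (x m * (y * σu2 + σv2) * d m ^ 2 * kL m / (ηr * Pv * y * β₀)) +
              (1 - p m) * regGamma (kN m)
                (x m * (y * σu2 + σv2) * d m ^ 2 * kN m / (ηr * Pv * y * η * β₀))) *
              mixDensity (p m) (kL m) (β₀ * d m ^ (-2 : ℝ)) (kN m)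
                (η * β₀ * d m ^ (-2 : ℝ)) y := by
    intro m hm
    have hdm := hd m hm
    have hrp : (0:ℝ) < d m ^ (-2 : ℝ) := Real.rpow_pos_of_pos hdm _
    have hΩL : (0:ℝ) < β₀ * d m ^ (-2 : ℝ) := by positivity
    have hΩN : (0:ℝ) < η * β₀ * d m ^ (-2 : ℝ) := by
      have := hη.1; positivity
    have ha : (0:ℝ) < ηr * Pv := by have := hηr.1; positivity
    have h := key (hp m hm) (hkL m hm) (hkN m hm) hΩL hΩN ha (hx m hm) hσu2 hσv2
      (hX m hm) (hY m hm) (hindep m hm) (hlawX m hm) (hlawY m hm)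
    rw [h]
    apply setIntegral_congr_fun measurableSet_Ioi
    intro y hy
    have hy0 : (0:ℝ) < y := hy
    have hdd : d m ^ (-2 : ℝ) = (d m ^ 2)⁻¹ := by
      rw [show (-2:ℝ) = ((-2:ℤ):ℝ) by norm_num, Real.rpow_intCast, zpow_neg]
      congr 1
    have hηr0 := hηr.1
    have hη0 := hη.1
    have hd2 : (0:ℝ) < d m ^ 2 := by positivity
    have e1 : x m * (y * σu2 + σv2) / (ηr * Pv * y) * (kL m / (β₀ * d m ^ (-2:ℝ)))
        = x m * (y * σu2 + σv2) * d m ^ 2 * kL m / (ηr * Pv * y * β₀) := by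
      rw [hdd]; field_simp
    have e2 : x m * (y * σu2 + σv2) / (ηr * Pv * y) * (kN m / (η * β₀ * d m ^ (-2:ℝ)))
        = x m * (y * σu2 + σv2) * d m ^ 2 * kN m / (ηr * Pv * y * η * β₀) := by
      rw [hdd]; field_simp
    simp only [e1, e2]
  calc (1 / (M : ℝ)) * ∑ m ∈ Finset.Icc 1 M,
        (1 - (1 - ((volume : Measure α)
              {ω | ηr * Pv * X m ω * Y m ω / (X m ω * σu2 + σv2) < x m}).toReal) *
          (1 - uplinkCDF pB kBL kBN β₀ η dB Pv σB2 xB) *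
          (1 - energyOutage (p m) (kL m) (kN m) β₀ η (d m) Pc ηc ηr Pv (m : ℝ)))
      = (1 / (M : ℝ)) * ∑ m ∈ Finset.Icc 1 M,
        (1 - (1 - uplinkCDF pB kBL kBN β₀ η dB Pv σB2 xB) *
          (1 - energyOutage (p m) (kL m) (kN m) β₀ η (d m) Pc ηc ηr Pv (m : ℝ)) *
          (1 - ∫ y in Set.Ioi (0:ℝ),
            (p m * regGamma (kL m)
                (x m * (y * σu2 + σv2) * d m ^ 2 * kL m / (ηr * Pv * y * β₀)) +
              (1 - p m) * regGamma (kN m)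
                (x m * (y * σu2 + σv2) * d m ^ 2 * kN m / (ηr * Pv * y * η * β₀))) *
              mixDensity (p m) (kL m) (β₀ * d m ^ (-2 : ℝ)) (kN m)
                (η * β₀ * d m ^ (-2 : ℝ)) y)) := by
        congr 1
        apply Finset.sum_congr rfl
        intro m hm
        rw [← key_m m hm]
        ring
    _ = _ := by
        rw [Finset.sum_sub_distrib, Finset.sum_const, hcard, nsmul_eq_mul, mul_one,
          mul_sub]
        have h1 : (1:ℝ) / M * M = 1 := by field_simp
        rw [h1]
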